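/- Switching lemma: let ℓ ≥ 9^r and let 𝒯 = {T₁,…,T_m}, 𝒮 = {S₁,…,S_m} be families of pairwise-disjoint rainbow independent sets in a coloured matroid M with Tᵢ ⊆ Sᵢ for all i. Suppose e ∉ E(𝒮) and T₀ ∪ {e} is a rainbow independent set for some T₀ ∈ 𝒯_ℓ^{(r)}. Then there is a family 𝒮* of pairwise-disjoint rainbow independent sets with E(𝒮*) = {e} ∪ (E(𝒮) \ X) for some X ⊆ E(𝒮) \ E(𝒯) with |X| ≤ 2^{r+1}. -/

import Mathlib

open Set

/-- A colouring of a matroid in which every colour class is independent. -/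
def IsColouring {α β : Type*} (M : Matroid α) (κ : α → β) : Prop :=
  ∀ b : β, M.Indep {x ∈ M.E | κ x = b}

/-- A rainbow independent set: independent, with pairwise distinct colours. -/
def RainbowIndep {α β : Type*} (M : Matroid α) (κ : α → β) (I : Set α) : Prop :=
  M.Indep I ∧ Set.InjOn κ I

/-- A family of pairwise-disjoint rainbow independent sets. -/
def RainbowFamily {α β : Type*} (M : Matroid α) (κ : α → β) {m : ℕ}
    (T : Fin m → Set α) : Prop :=
  (∀ i, RainbowIndep M κ (T i)) ∧ Pairwise (Function.onFun Disjoint T)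

/-- The `ℓ`-reduction of a family: delete every element `e` for which at least `ℓ`
members `T j` (not already containing `e`) have `T j ∪ {e}` a rainbow independent set. -/
def reduceFam {α β : Type*} (M : Matroid α) (κ : α → β) (ℓ : ℕ) {m : ℕ}
    (T : Fin m → Set α) : Fin m → Set α :=
  fun i => {e ∈ T i |
    {j : Fin m | e ∉ T j ∧ RainbowIndep M κ (insert e (T j))}.ncard < ℓ}

/-- The `r`-fold iterated `ℓ`-reduction of a family. -/
def reduceIter {α β : Type*} (M : Matroid α) (κ : α → β) (ℓ : ℕ) {m : ℕ}
    (r : ℕ) (T : Fin m → Set α) : Fin m → Set α :=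
  (fun S => reduceFam M κ ℓ S)^[r] T

/-!
Insert `e` into `S i₀`. By the exchange property of the matroid, together with the removal of the
element of `S i₀` sharing the colour of `e`, this costs at most two elements `D ⊆ S i₀`, none of
them in the reduction `T^{(r)} i₀`. Elements of `D` outside `E(T)` are discarded. Every other one
lies in `T i₀` and was deleted in some round `s < r`, so at least `ℓ` members of the `s`-fold
reduction accept it; as fewer than `ℓ` members have been modified so far, it can be inserted
recursively, at level `s`, into a member that still equals its `S`. The recursion modifies at most
`2^{r+1} - 1` members and discards at most `2^{r+1}` elements.
-/

lemma Matroid.Indep.exists_insert_sdiff_indep {α : Type*} {M : Matroid α} {I A : Set α} {z : α}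
    (hI : M.Indep I) (hzI : z ∉ I) (hzA : M.Indep (insert z A)) :
    ∃ J ⊆ I \ A, J.Subsingleton ∧ M.Indep (insert z (I \ J)) := by
  by_cases hz : M.Indep (insert z I)
  · exact ⟨∅, empty_subset _, subsingleton_empty, by rwa [sdiff_empty]⟩
  have hzcl : z ∈ M.closure I := by
    by_contra h
    exact hz ((hI.insert_indep_iff_of_notMem hzI).2 ⟨hzA.subset_ground (mem_insert z A), h⟩)
  obtain ⟨x, hxC, hxA⟩ : ∃ x ∈ M.fundCircuit z I, x ∉ insert z A :=
    not_subset.1 fun h => (hI.fundCircuit_isCircuit hzcl hzI).dep.not_indep (hzA.subset h)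
  have hxz : x ≠ z := fun h => hxA (h ▸ mem_insert z A)
  have hxI : x ∈ I := (mem_insert_iff.1 (M.fundCircuit_subset_insert z I hxC)).resolve_left hxz
  refine ⟨{x}, singleton_subset_iff.2 ⟨hxI, fun h => hxA (mem_insert_of_mem z h)⟩,
    subsingleton_singleton, ?_⟩
  rw [insert_sdiff_singleton_comm hxz.symm]
  exact (hI.mem_fundCircuit_iff hzcl hzI).1 hxC

section SetFamily

variable {α ι : Type*} {U : ι → Set α}

lemma Set.Subsingleton.ncard_le_one {s : Set α} (hs : s.Subsingleton) : s.ncard ≤ 1 :=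
  (Set.ncard_le_one hs.finite).2 hs

lemma sdiff_union_inter_of_subset {A D : Set α} (hDA : D ⊆ A) (E : Set α) :
    (A \ D) ∪ (D ∩ E) = A \ (D \ E) := by
  ext w
  have := @hDA w
  simp only [mem_union, mem_sdiff, mem_inter_iff] at this ⊢
  tauto

lemma iUnion_update_insert_sdiff [DecidableEq ι] (hU : Pairwise (Function.onFun Disjoint U))
    {j₀ : ι} {D : Set α} (hD : D ⊆ U j₀) (z : α) :
    ⋃ j, Function.update U j₀ (insert z (U j₀ \ D)) j = ((⋃ j, U j) \ D) ∪ {z} := by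
  ext x
  simp only [mem_iUnion, mem_union, mem_sdiff, mem_singleton_iff]
  constructor
  · rintro ⟨j, hj⟩
    rcases eq_or_ne j j₀ with rfl | hne
    · rw [Function.update_self, mem_insert_iff, mem_sdiff] at hj
      exact hj.symm.imp (fun h => ⟨⟨j, h.1⟩, h.2⟩) id
    · rw [Function.update_of_ne hne] at hj
      exact Or.inl ⟨⟨j, hj⟩, fun hxD => disjoint_left.1 (hU hne) hj (hD hxD)⟩
  · rintro (⟨⟨j, hj⟩, hxD⟩ | rfl)
    · rcases eq_or_ne j j₀ with rfl | hne
      · exact ⟨j, by simp [hj, hxD]⟩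
      · exact ⟨j, by rwa [Function.update_of_ne hne]⟩
    · exact ⟨j₀, by simp⟩

lemma Pairwise.disjoint_biUnion_compl (hU : Pairwise (Function.onFun Disjoint U)) {K : Set ι}
    {j₀ : ι} (hj₀ : j₀ ∈ K) : Disjoint (U j₀) (⋃ j ∈ Kᶜ, U j) :=
  disjoint_iUnion₂_right.2 fun _ hj => hU (ne_of_mem_of_not_mem hj₀ hj)

lemma Pairwise.mem_of_mem_iUnion {S : ι → Set α} (hS : Pairwise (Function.onFun Disjoint S))
    (hUS : ∀ i, U i ⊆ S i) {j₀ : ι} {x : α} (hxS : x ∈ S j₀) (hxU : x ∈ ⋃ j, U j) : x ∈ U j₀ := by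
  obtain ⟨j, hxj⟩ := mem_iUnion.1 hxU
  obtain rfl : j = j₀ := by_contra fun hne => disjoint_left.1 (hS hne) (hUS j hxj) hxS
  exact hxj

end SetFamily

section Rainbow

variable {α β : Type*} {M : Matroid α} {κ : α → β} {m : ℕ}

lemma RainbowIndep.exists_insert_sdiff {A B : Set α} {z : α} (hB : RainbowIndep M κ B)
    (hzB : z ∉ B) (hzA : RainbowIndep M κ (insert z A)) :
    ∃ D ⊆ B \ A, D.Finite ∧ D.ncard ≤ 2 ∧ RainbowIndep M κ (insert z (B \ D)) := by
  set C := {x ∈ B | κ x = κ z}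
  have hC : C.Subsingleton := fun x hx y hy => hB.2 hx.1 hy.1 (hx.2.trans hy.2.symm)
  have hCA : Disjoint C A := by
    refine disjoint_left.2 fun x hxC hxA => hzB ?_
    rw [← hzA.2 (mem_insert_of_mem z hxA) (mem_insert z A) hxC.2]
    exact hxC.1
  obtain ⟨J, hJ, hJs, hJind⟩ := (hB.1.subset (sdiff_subset (t := C))).exists_insert_sdiff_indep
    (fun h => hzB h.1) hzA.1
  refine ⟨C ∪ J, union_subset (subset_sdiff.2 ⟨sep_subset _ _, hCA⟩)
    (hJ.trans (sdiff_subset_sdiff_left sdiff_subset)), hC.finite.union hJs.finite,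
    (ncard_union_le C J).trans (add_le_add hC.ncard_le_one hJs.ncard_le_one), ?_⟩
  rw [← sdiff_sdiff]
  refine ⟨hJind, (injOn_insert fun h => hzB h.1.1).2
    ⟨hB.2.mono (sdiff_subset.trans sdiff_subset), ?_⟩⟩
  rintro ⟨x, hx, hxz⟩
  exact hx.1.2 ⟨hx.1.1, hxz⟩

lemma RainbowFamily.update {U : Fin m → Set α} (hU : RainbowFamily M κ U) (j₀ : Fin m)
    {N : Set α} (hN : RainbowIndep M κ N) (hdisj : ∀ j ≠ j₀, Disjoint N (U j)) :
    RainbowFamily M κ (Function.update U j₀ N) := by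
  refine ⟨fun i => ?_, fun i j hij => ?_⟩
  · rcases eq_or_ne i j₀ with rfl | hi
    · simpa using hN
    · simpa [hi] using hU.1 i
  · rcases eq_or_ne i j₀ with rfl | hi
    · simpa [Function.onFun, hij.symm] using hdisj j hij.symm
    rcases eq_or_ne j j₀ with rfl | hj
    · simpa [Function.onFun, hi] using (hdisj i hi).symm
    · simpa [Function.onFun, hi, hj] using hU.2 hij

end Rainbow

section Reduction

variable {α β : Type*} {M : Matroid α} {κ : α → β} {ℓ m : ℕ} {T : Fin m → Set α}

def extenders (M : Matroid α) (κ : α → β) (T : Fin m → Set α) (e : α) : Set (Fin m) :=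
  {j | e ∉ T j ∧ RainbowIndep M κ (insert e (T j))}

lemma mem_reduceFam {e : α} {i : Fin m} :
    e ∈ reduceFam M κ ℓ T i ↔ e ∈ T i ∧ (extenders M κ T e).ncard < ℓ := Iff.rfl

lemma reduceIter_succ (s : ℕ) :
    reduceIter M κ ℓ (s + 1) T = reduceFam M κ ℓ (reduceIter M κ ℓ s T) :=
  Function.iterate_succ_apply' _ s T

lemma exists_lt_le_ncard_extenders {s : ℕ} {i : Fin m} {x : α} (hx : x ∈ T i)
    (hxs : x ∉ reduceIter M κ ℓ s T i) :
    ∃ s' < s, ℓ ≤ (extenders M κ (reduceIter M κ ℓ s' T) x).ncard := by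
  induction s with
  | zero => exact absurd hx hxs
  | succ s ih =>
    by_cases hxs' : x ∈ reduceIter M κ ℓ s T i
    · rw [reduceIter_succ, mem_reduceFam, not_and, not_lt] at hxs
      exact ⟨s, s.lt_succ_self, hxs hxs'⟩
    · obtain ⟨s', hs', h⟩ := ih hxs'
      exact ⟨s', hs'.trans s.lt_succ_self, h⟩

end Reduction

section Absorb

variable {α β : Type*} {M : Matroid α} {κ : α → β} {ℓ m : ℕ} {S T U : Fin m → Set α}
  {K : Set (Fin m)} {Y : Set α} {s t x : ℕ}

/-- Starting from `U`, which agrees with `S` outside the set `K` of modified members, the elements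
of `Y` can be added by modifying at most `t` further members and discarding a set `X` of at most
`x` elements, all taken from unmodified members of `S` and outside `E(T)`. -/
def CanAbsorb (M : Matroid α) (κ : α → β) (S T U : Fin m → Set α) (K : Set (Fin m))
    (Y : Set α) (t x : ℕ) : Prop :=
  ∃ (U' : Fin m → Set α) (K' : Set (Fin m)) (X : Set α), RainbowFamily M κ U' ∧ K ⊆ K' ∧
    EqOn U' S K'ᶜ ∧ K'.ncard ≤ K.ncard + t ∧ X ⊆ (⋃ j ∈ Kᶜ, S j) \ ⋃ j, T j ∧ X.ncard ≤ x ∧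
    ⋃ j, U' j = ((⋃ j, U j) \ X) ∪ Y

lemma canAbsorb_empty (hU : RainbowFamily M κ U) (hUS : EqOn U S Kᶜ) :
    CanAbsorb M κ S T U K ∅ 0 0 :=
  ⟨U, K, ∅, hU, subset_rfl, hUS, le_rfl, empty_subset _, by simp, by simp⟩

lemma CanAbsorb.mono {t' x' : ℕ} (h : CanAbsorb M κ S T U K Y t x) (ht : t ≤ t') (hx : x ≤ x') :
    CanAbsorb M κ S T U K Y t' x' := by
  obtain ⟨U', K', X, hU', hKK', hU'S, hK', hX, hXcard, hunion⟩ := h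
  exact ⟨U', K', X, hU', hKK', hU'S, by omega, hX, hXcard.trans hx, hunion⟩

/-- Composition of a direct move `U ↦ U₁`, which discards `X₁` and leaves the elements of `P`
without a member, with the absorption of `P`. -/
lemma CanAbsorb.of_step {U₁ : Fin m → Set α} {K₁ : Set (Fin m)} {X₁ P : Set α} {t₁ x₁ : ℕ}
    (hKK₁ : K ⊆ K₁) (hK₁ : K₁.ncard ≤ K.ncard + t₁)
    (hX₁ : X₁ ⊆ (⋃ j ∈ Kᶜ, S j) \ ⋃ j, T j) (hX₁card : X₁.ncard ≤ x₁)
    (hunion : (⋃ j, U₁ j) ∪ P = ((⋃ j, U j) \ X₁) ∪ Y)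
    (hdisj : Disjoint (P ∪ Y) (⋃ j ∈ K₁ᶜ, S j)) (h : CanAbsorb M κ S T U₁ K₁ P t x) :
    CanAbsorb M κ S T U K Y (t₁ + t) (x₁ + x) := by
  obtain ⟨U', K', X, hU', hK₁K', hU'S, hK', hX, hXcard, hunion'⟩ := h
  have hXK : (⋃ j ∈ K₁ᶜ, S j) ⊆ ⋃ j ∈ Kᶜ, S j :=
    biUnion_subset_biUnion_left (compl_subset_compl.2 hKK₁)
  have hPYX : Disjoint (P ∪ Y) X := hdisj.mono_right (hX.trans sdiff_subset)
  refine ⟨U', K', X₁ ∪ X, hU', hKK₁.trans hK₁K', hU'S, by omega,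
    union_subset hX₁ (hX.trans (sdiff_subset_sdiff_left hXK)),
    (ncard_union_le _ _).trans (add_le_add hX₁card hXcard), ?_⟩
  rw [hunion']
  ext w
  have hw := Set.ext_iff.1 hunion w
  have hwX : w ∈ P ∪ Y → w ∉ X := fun h => disjoint_left.1 hPYX h
  simp only [mem_union, mem_sdiff] at hw hwX ⊢
  tauto

/-- The switching lemma at level `s`, for a family in which the members indexed by `K` have
already been modified. -/
def SwitchAt (M : Matroid α) (κ : α → β) (ℓ : ℕ) (S T : Fin m → Set α) (s : ℕ) : Prop :=
  ∀ (U : Fin m → Set α) (K : Set (Fin m)) (z : α) (j₀ : Fin m), RainbowFamily M κ U →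
    EqOn U S Kᶜ → j₀ ∉ K → z ∉ ⋃ j, U j →
    RainbowIndep M κ (insert z (reduceIter M κ ℓ s T j₀)) → K.ncard + 2 ^ (s + 1) ≤ ℓ + 1 →
    CanAbsorb M κ S T U K {z} (2 ^ (s + 1) - 1) (2 ^ (s + 1))

lemma canAbsorb_singleton_of_notMem_reduceIter (ih : ∀ s' < s, SwitchAt M κ ℓ S T s')
    (hU : RainbowFamily M κ U) (hUS : EqOn U S Kᶜ) {d : α} (hdU : d ∉ ⋃ j, U j) {j : Fin m}
    (hdT : d ∈ T j) (hds : d ∉ reduceIter M κ ℓ s T j) (hK : K.ncard + 2 ^ s ≤ ℓ + 1) :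
    CanAbsorb M κ S T U K {d} (2 ^ s - 1) (2 ^ s) := by
  obtain ⟨s', hs', hℓ⟩ := exists_lt_le_ncard_extenders hdT hds
  have h2s : 2 ^ (s' + 1) ≤ 2 ^ s := Nat.pow_le_pow_right two_pos hs'
  have h2 : 2 ≤ 2 ^ (s' + 1) := Nat.le_self_pow (Nat.succ_ne_zero s') 2
  -- `d` has at least `ℓ` extenders at level `s'`, but fewer than `ℓ` members are modified
  obtain ⟨j₁, hj₁, hj₁K⟩ := exists_mem_notMem_of_ncard_lt_ncard (s := K)
    (t := extenders M κ (reduceIter M κ ℓ s' T) d) (by omega)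
  exact (ih s' hs' U K d j₁ hU hUS hj₁K hdU hj₁.2 (by omega)).mono (by omega) h2s

lemma canAbsorb_of_notMem_reduceIter (ih : ∀ s' < s, SwitchAt M κ ℓ S T s')
    (hU : RainbowFamily M κ U) (hUS : EqOn U S Kᶜ) {D : Set α} (hD : D.Finite)
    (hDU : Disjoint D (⋃ j, U j)) (hDK : Disjoint D (⋃ j ∈ Kᶜ, S j))
    (hDs : ∀ d ∈ D, ∃ j, d ∈ T j ∧ d ∉ reduceIter M κ ℓ s T j)
    (hK : K.ncard + D.ncard * (2 ^ s - 1) ≤ ℓ) :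
    CanAbsorb M κ S T U K D (D.ncard * (2 ^ s - 1)) (D.ncard * 2 ^ s) := by
  induction D, hD using Set.Finite.induction_on with
  | empty => simpa using canAbsorb_empty hU hUS
  | @insert a D haD hD ihD =>
    rw [ncard_insert_of_notMem haD hD, add_one_mul, add_one_mul] at *
    obtain ⟨U₁, K₁, X₁, hU₁, hKK₁, hU₁S, hK₁, hX₁, hX₁card, hunion⟩ :=
      ihD (hDU.mono_left (subset_insert a D)) (hDK.mono_left (subset_insert a D))
        (fun d hd => hDs d (mem_insert_of_mem a hd)) (by omega)
    obtain ⟨j, haT, has⟩ := hDs a (mem_insert a D)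
    have haU₁ : a ∉ ⋃ j, U₁ j := by
      rw [hunion]
      rintro (⟨haU, -⟩ | haD')
      · exact disjoint_left.1 hDU (mem_insert a D) haU
      · exact haD haD'
    have hp : 1 ≤ 2 ^ s := Nat.one_le_two_pow
    refine CanAbsorb.of_step hKK₁ hK₁ hX₁ hX₁card ?_ ?_
      (canAbsorb_singleton_of_notMem_reduceIter ih hU₁ hU₁S haU₁ haT has (by omega))
    · rw [hunion, union_assoc, union_singleton]
    · exact hDK.mono (union_subset (singleton_subset_iff.2 (mem_insert a D)) subset_rfl)
        (biUnion_subset_biUnion_left (compl_subset_compl.2 hKK₁))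

lemma cost_bounds_of_add_le_two {k c d : ℕ} (hcd : c + d ≤ 2) (hk : k + 2 ^ (s + 1) ≤ ℓ + 1) :
    k + 1 + c * (2 ^ s - 1) ≤ ℓ ∧ 1 + c * (2 ^ s - 1) ≤ 2 ^ (s + 1) - 1 ∧
      d + c * 2 ^ s ≤ 2 ^ (s + 1) := by
  have hp : 1 ≤ 2 ^ s := Nat.one_le_two_pow
  have h₁ : c * (2 ^ s - 1) ≤ 2 * (2 ^ s - 1) := Nat.mul_le_mul_right _ (by omega)
  have h₂ : (c + d) * 2 ^ s ≤ 2 * 2 ^ s := Nat.mul_le_mul_right _ hcd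
  have h₃ : d ≤ d * 2 ^ s := Nat.le_mul_of_pos_right d hp
  rw [pow_succ] at hk ⊢
  rw [add_mul] at h₂
  omega

lemma switchAt_of_lt (hS : Pairwise (Function.onFun Disjoint S)) (hsub : ∀ i, T i ⊆ S i)
    (ih : ∀ s' < s, SwitchAt M κ ℓ S T s') : SwitchAt M κ ℓ S T s := by
  intro U K z j₀ hU hUS hj₀ hzU hz hK
  have hUj₀ : U j₀ = S j₀ := hUS hj₀
  have hzU' : ∀ j, z ∉ U j := fun j h => hzU (mem_iUnion_of_mem j h)
  obtain ⟨D, hDA, hDfin, hDcard, hzD⟩ := (hU.1 j₀).exists_insert_sdiff (hzU' j₀) hz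
  have hDj₀ : D ⊆ S j₀ := hUj₀ ▸ hDA.trans sdiff_subset
  set U₁ := Function.update U j₀ (insert z (U j₀ \ D))
  have hU₁ : RainbowFamily M κ U₁ := hU.update j₀ hzD fun j hj =>
    disjoint_insert_left.2 ⟨hzU' j, (hU.2 hj.symm).mono_left sdiff_subset⟩
  have hU₁S : EqOn U₁ S (insert j₀ K)ᶜ := fun j hj => by
    rw [mem_compl_iff, mem_insert_iff, not_or] at hj
    simp only [U₁, Function.update_of_ne hj.1, hUS hj.2]
  have hunion₁ : ⋃ j, U₁ j = ((⋃ j, U j) \ D) ∪ {z} :=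
    iUnion_update_insert_sdiff hU.2 (hUj₀ ▸ hDj₀) z
  have hDK₁ : Disjoint D (⋃ j ∈ (insert j₀ K)ᶜ, S j) :=
    (hS.disjoint_biUnion_compl (mem_insert j₀ K)).mono_left hDj₀
  have hzK₁ : z ∉ ⋃ j ∈ (insert j₀ K)ᶜ, S j := by
    simp only [mem_iUnion, not_exists]
    exact fun j hj hzj => hzU' j ((hUS fun h => hj (mem_insert_of_mem j₀ h)) ▸ hzj)
  -- the elements of `D` in `E(T)` are re-inserted, the others are discarded
  set P := D ∩ ⋃ j, T j
  have hPU₁ : Disjoint P (⋃ j, U₁ j) := by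
    rw [hunion₁, disjoint_union_right, disjoint_singleton_right]
    exact ⟨disjoint_sdiff_right.mono_left inter_subset_left, fun h => hzU' j₀ (hUj₀ ▸ hDj₀ h.1)⟩
  have hPs : ∀ d ∈ P, ∃ j, d ∈ T j ∧ d ∉ reduceIter M κ ℓ s T j := fun d hd =>
    ⟨j₀, hS.mem_of_mem_iUnion hsub (hDj₀ hd.1) hd.2, (hDA hd.1).2⟩
  obtain ⟨hbudget, ht, hx⟩ := cost_bounds_of_add_le_two
    ((ncard_inter_add_ncard_sdiff_eq_ncard D _ hDfin).trans_le hDcard) hK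
  have hK₁ := ncard_insert_le j₀ K
  refine (CanAbsorb.of_step (subset_insert j₀ K) hK₁ ?_ le_rfl ?_ ?_
    (canAbsorb_of_notMem_reduceIter ih hU₁ hU₁S (hDfin.inter_of_left _) hPU₁
      (hDK₁.mono_left inter_subset_left) hPs (by omega))).mono ht hx
  · exact sdiff_subset_sdiff_left (hDj₀.trans (subset_biUnion_of_mem hj₀))
  · rw [hunion₁, union_right_comm, sdiff_union_inter_of_subset]
    exact fun w hw => mem_iUnion_of_mem j₀ (hUj₀ ▸ hDj₀ hw)
  · exact disjoint_union_left.2 ⟨hDK₁.mono_left inter_subset_left, disjoint_singleton_left.2 hzK₁⟩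

theorem switchAt (hS : Pairwise (Function.onFun Disjoint S)) (hsub : ∀ i, T i ⊆ S i) (s : ℕ) :
    SwitchAt M κ ℓ S T s :=
  Nat.strong_induction_on s fun _ ih => switchAt_of_lt hS hsub ih

end Absorb

lemma two_pow_succ_le_nine_pow_add_one (r : ℕ) : 2 ^ (r + 1) ≤ 9 ^ r + 1 := by
  induction r with
  | zero => norm_num
  | succ r ih =>
    have := Nat.one_le_pow r 9 (by norm_num)
    rw [pow_succ, pow_succ 9]
    omega

theorem switching_lemma_general {α β : Type*} (M : Matroid α)
    (κ : α → β) {m : ℕ} (r ℓ : ℕ) (hℓ : 9 ^ r ≤ ℓ)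
    (T S : Fin m → Set α)
    (hS : RainbowFamily M κ S)
    (hsub : ∀ i, T i ⊆ S i)
    (e : α) (he : e ∉ ⋃ i, S i) (i₀ : Fin m)
    (hext : RainbowIndep M κ (insert e (reduceIter M κ ℓ r T i₀))) :
    ∃ Sstar : Fin m → Set α, RainbowFamily M κ Sstar ∧
      ∃ X ⊆ (⋃ i, S i) \ (⋃ i, T i), X.ncard ≤ 2 ^ (r + 1) ∧
        (⋃ i, Sstar i) = insert e ((⋃ i, S i) \ X) := by
  have hbudget : (∅ : Set (Fin m)).ncard + 2 ^ (r + 1) ≤ ℓ + 1 := by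
    have := two_pow_succ_le_nine_pow_add_one r
    rw [ncard_empty]
    omega
  obtain ⟨Sstar, -, X, hSstar, -, -, -, hX, hXcard, hunion⟩ :=
    switchAt hS.2 hsub r S ∅ e i₀ hS (eqOn_refl S _) (notMem_empty i₀) he hext hbudget
  refine ⟨Sstar, hSstar, X, ?_, hXcard, by rw [hunion, union_singleton]⟩
  simpa using hX

/-- **Switching lemma.** Let `ℓ ≥ 9^r`, and let `𝒯 ⊆ 𝒮` (componentwise) be families of
pairwise-disjoint rainbow independent sets. If `e ∉ E(𝒮)` extends some member of
`𝒯_ℓ^{(r)}` to a rainbow independent set, then there is a family `𝒮*` of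
pairwise-disjoint rainbow independent sets with `E(𝒮*) = {e} ∪ (E(𝒮) \ X)` for some
`X ⊆ E(𝒮) \ E(𝒯)` with `|X| ≤ 2^{r+1}`. -/
theorem switching_lemma {α β : Type*} (M : Matroid α) [M.Finite]
    (κ : α → β) (hκ : IsColouring M κ) {m : ℕ} (r ℓ : ℕ) (hℓ : 9 ^ r ≤ ℓ)
    (T S : Fin m → Set α)
    (hT : RainbowFamily M κ T) (hS : RainbowFamily M κ S)
    (hsub : ∀ i, T i ⊆ S i)
    (e : α) (he : e ∉ ⋃ i, S i) (i₀ : Fin m)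
    (hext : RainbowIndep M κ (insert e (reduceIter M κ ℓ r T i₀))) :
    ∃ Sstar : Fin m → Set α, RainbowFamily M κ Sstar ∧
      ∃ X ⊆ (⋃ i, S i) \ (⋃ i, T i), X.ncard ≤ 2 ^ (r + 1) ∧
        (⋃ i, Sstar i) = insert e ((⋃ i, S i) \ X) :=
  switching_lemma_general M κ r ℓ hℓ T S hS hsub e he i₀ hext
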